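/- arXiv:2104.05535 — 4 statements merged into one kernel-verified Lean document; each statement's English description precedes it below -/
import Mathlib

section
/- There exist a real Banach space X and an L-orthogonal sequence (x_n) in X such that for every nonprincipal ultrafilter U on ℕ that is not a Q-point, the weak*-limit of the sequence (ι(x_n)) along U in X** is not an L-orthogonal element of X**, where ι : X → X** is the canonical embedding. -/
open NormedSpace

/-- `(x n)` is an `L`-orthogonal sequence in `X`: it lies in the closed unit ball and
`‖z + x n‖ → 1 + ‖z‖` for every `z ∈ X`. -/
def IsLOrthogonalSeq {X : Type} [NormedAddCommGroup X] [NormedSpace ℝ X] (x : ℕ → X) : Prop :=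
  (∀ n, ‖x n‖ ≤ 1) ∧
    ∀ z : X, Filter.Tendsto (fun n => ‖z + x n‖) Filter.atTop (nhds (1 + ‖z‖))

/-- `u ∈ X**` is an `L`-orthogonal element: `‖u‖ = 1` and `‖ι z + u‖ = 1 + ‖z‖`
for every `z ∈ X`. -/
def IsLOrthogonalElem {X : Type} [NormedAddCommGroup X] [NormedSpace ℝ X]
    (u : StrongDual ℝ (StrongDual ℝ X)) : Prop :=
  ‖u‖ = 1 ∧ ∀ z : X, ‖inclusionInDoubleDual ℝ X z + u‖ = 1 + ‖z‖

/-- `U` is a `Q`-point: for every partition of `ℕ` into nonempty finite sets there is a set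
in `U` meeting each piece in exactly one point. -/
def IsQPoint (U : Ultrafilter ℕ) : Prop :=
  ∀ A : ℕ → Set ℕ, (∀ n, (A n).Finite) → (∀ n, (A n).Nonempty) →
    Pairwise (Function.onFun Disjoint A) → (⋃ n, A n) = Set.univ →
    ∃ B ∈ U, ∀ n, (B ∩ A n).ncard = 1

/-- `X` carries an `L`-orthogonal sequence `(x n)` such that for every nonprincipal
ultrafilter `U` on `ℕ` that is not a `Q`-point, the weak*-limit of `(ι (x n))` along `U`
is not an `L`-orthogonal element of `X**`. -/
def HasBadLOrthogonalSeq (X : Type) [NormedAddCommGroup X] [NormedSpace ℝ X]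
    [CompleteSpace X] : Prop :=
  ∃ x : ℕ → X, IsLOrthogonalSeq x ∧
    ∀ U : Ultrafilter ℕ, (∀ n : ℕ, (U : Filter ℕ) ≠ pure n) → ¬ IsQPoint U →
      ∀ u : StrongDual ℝ (StrongDual ℝ X),
        Filter.Tendsto (fun n => StrongDual.toWeakDual (inclusionInDoubleDual ℝ X (x n)))
          (U : Filter ℕ) (nhds (StrongDual.toWeakDual u)) →
        ¬ IsLOrthogonalElem u

/-! For a partition `c` of `ℕ` into finite pieces let `N_c b = ∑ₖ max_{c i = k} |b i|`, and norm
pairs `(a, b)` by `sup_c (|a c| + N_c b)`. The unit vectors `e n = (0, δₙ)` are `L`-orthogonal: far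
out, `δₙ` lies in a piece of `c` that misses the support of a given `b`, so it adds `1` to `N_c b`.
On the other hand `z c = (δ_c, 0)` has `‖z c + e n + e m‖ ≤ 2` whenever `n ≠ m` lie in the same
piece of `c`. If the weak*-limit `u` of `e n` along `U` were `L`-orthogonal, a functional `f` of
norm `≤ 1` nearly norming `ι (z c) + u` would satisfy `f (z c) ≈ 1` and `f (e n) > 5/8` for
`U`-many `n`, so `‖z c + e n + e m‖ > 2` for all such `n ≠ m`: the pieces of `c` meet a set of `U`
at most once each, and since `c` is arbitrary, `U` is a `Q`-point. -/

open Filter Topology NormedSpace UniformSpace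

theorem ContinuousLinearMap.exists_norm_lt_one_lt_apply {E : Type*} [NormedAddCommGroup E]
    [NormedSpace ℝ E] (T : E →L[ℝ] ℝ) {r : ℝ} (hr : r < ‖T‖) :
    ∃ f : E, ‖f‖ < 1 ∧ r < T f := by
  obtain ⟨f, hf, hrf⟩ := ContinuousLinearMap.exists_lt_apply_of_lt_opNorm T hr
  rcases le_total 0 (T f) with h | h
  · exact ⟨f, hf, by rwa [Real.norm_of_nonneg h] at hrf⟩
  · exact ⟨-f, by rwa [norm_neg], by rwa [map_neg, ← Real.norm_of_nonpos h]⟩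

theorem StrongDual.apply_le_of_norm_le_one {E : Type*} [SeminormedAddCommGroup E]
    [NormedSpace ℝ E] {f : StrongDual ℝ E} (hf : ‖f‖ ≤ 1) (x : E) : f x ≤ ‖x‖ :=
  calc f x ≤ ‖f x‖ := le_abs_self _
    _ ≤ 1 * ‖x‖ := f.le_of_opNorm_le hf x
    _ = ‖x‖ := one_mul _

section LOrthogonal

variable {X : Type} [NormedAddCommGroup X] [NormedSpace ℝ X]

theorem isLOrthogonalSeq_coe_completion {x : ℕ → X} (hx : IsLOrthogonalSeq x) :
    IsLOrthogonalSeq fun n => (x n : Completion X) := by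
  refine ⟨fun n => (Completion.norm_coe (x n)).trans_le (hx.1 n), fun z => ?_⟩
  have hlip : ∀ n, LipschitzWith 1 fun z : Completion X => ‖z + x n‖ := fun n =>
    LipschitzWith.of_dist_le_mul fun z w => by
      simpa [Real.dist_eq, dist_eq_norm] using abs_norm_sub_norm_le (z + x n) (w + x n)
  refine Completion.induction_on z
    ((LipschitzWith.uniformEquicontinuous _ 1 hlip).equicontinuous.isClosed_setOfPred_tendsto
      (continuous_const.add continuous_norm)) fun z => ?_
  simpa only [← Completion.coe_add, Completion.norm_coe] using hx.2 z

theorem IsLOrthogonalElem.exists_mem_forall_lt_norm_add_add {ι : Type*} {l : Filter ι}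
    {x : ι → X} {u : StrongDual ℝ (StrongDual ℝ X)} (hu : IsLOrthogonalElem u)
    (hlim : Tendsto (fun n => StrongDual.toWeakDual (inclusionInDoubleDual ℝ X (x n))) l
      (𝓝 (StrongDual.toWeakDual u))) (z : X) :
    ∃ B ∈ l, ∀ n ∈ B, ∀ m ∈ B, ‖z‖ + 1 < ‖z + x n + x m‖ := by
  obtain ⟨f, hf, hzuf⟩ : ∃ f : StrongDual ℝ X, ‖f‖ < 1 ∧ 1 + ‖z‖ - 1 / 4 < f z + u f := by
    simpa [hu.2 z] using
      (inclusionInDoubleDual ℝ X z + u).exists_norm_lt_one_lt_apply (r := 1 + ‖z‖ - 1 / 4)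
  have hfz : f z ≤ ‖z‖ := f.apply_le_of_norm_le_one hf.le z
  have huf : u f ≤ 1 := calc
    u f ≤ ‖f‖ := u.apply_le_of_norm_le_one hu.1.le f
    _ ≤ 1 := hf.le
  have hfx : Tendsto (fun n => f (x n)) l (𝓝 (u f)) :=
    ((WeakDual.eval_continuous f).tendsto _).comp hlim
  refine ⟨_, hfx.eventually (lt_mem_nhds (a := 5 / 8) (by linarith)), fun n hn m hm => ?_⟩
  calc ‖z‖ + 1 < f (z + x n + x m) := by simp only [map_add]; linarith [hn.out, hm.out]
    _ ≤ ‖z + x n + x m‖ := f.apply_le_of_norm_le_one hf.le _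

end LOrthogonal

theorem isQPoint_of_forall_injOn {U : Ultrafilter ℕ}
    (h : ∀ g : ℕ → ℕ, (∀ k, (g ⁻¹' {k}).Finite) → ∃ B ∈ U, Set.InjOn g B) : IsQPoint U := by
  intro A hfin hne hdisj hcover
  choose g hg using fun i => Set.mem_iUnion.mp (hcover.symm ▸ Set.mem_univ i : i ∈ ⋃ n, A n)
  have hA : ∀ i k, i ∈ A k ↔ g i = k := fun i k =>
    ⟨fun hi => by_contra fun hne => Set.disjoint_left.mp (hdisj hne) (hg i) hi,
      fun h => h ▸ hg i⟩
  obtain ⟨B, hB, hinj⟩ := h g fun k => (hfin k).subset fun i hi => (hA i k).2 hi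
  -- a selector of the partition that picks the point of `B` in each piece when there is one
  classical
  let t : ℕ → ℕ := fun k => if h : (B ∩ A k).Nonempty then h.some else (hne k).some
  have ht : ∀ k, g (t k) = k := fun k => (hA _ k).1 <| by
    by_cases h : (B ∩ A k).Nonempty
    · simpa [t, h] using h.some_mem.2
    · simpa [t, h] using (hne k).some_mem
  have hBt : B ⊆ Set.range t := fun i hi => by
    have h : (B ∩ A (g i)).Nonempty := ⟨i, hi, hg i⟩
    refine ⟨g i, hinj ?_ hi ((ht _).trans rfl)⟩
    simpa [t, h] using h.some_mem.1
  refine ⟨Set.range t, U.1.mem_of_superset hB hBt, fun k => ?_⟩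
  have : Set.range t ∩ A k = {t k} := by
    ext i
    simp only [Set.mem_inter_iff, Set.mem_range, Set.mem_singleton_iff, hA]
    constructor
    · rintro ⟨⟨j, rfl⟩, rfl⟩
      rw [ht]
    · rintro rfl
      exact ⟨⟨k, rfl⟩, ht k⟩
  rw [this, Set.ncard_singleton]

theorem Finsupp.norm_apply_le_sum_norm {α : Type*} (f : α →₀ ℝ) (a : α) :
    ‖f a‖ ≤ ∑ b ∈ f.support, ‖f b‖ := by
  by_cases ha : a ∈ f.support
  · exact Finset.single_le_sum (fun b _ => norm_nonneg (f b)) ha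
  · rw [Finsupp.notMem_support_iff.1 ha, norm_zero]
    exact Finset.sum_nonneg fun b _ => norm_nonneg (f b)

noncomputable section

/-- A partition of `ℕ` into finite pieces, encoded by the map sending a point to the index of
its piece. -/
def FiniteToOne : Type := {c : ℕ → ℕ // ∀ k, (c ⁻¹' {k}).Finite}

namespace FiniteToOne

instance : CoeFun FiniteToOne fun _ => ℕ → ℕ := ⟨Subtype.val⟩

instance : Inhabited FiniteToOne :=
  ⟨⟨id, fun k => Set.finite_singleton k⟩⟩

def fiber (c : FiniteToOne) (k : ℕ) : Finset ℕ := (c.2 k).toFinset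

@[simp] theorem mem_fiber {c : FiniteToOne} {k i : ℕ} : i ∈ c.fiber k ↔ c i = k := by
  simp [fiber]

open Finsupp

def blockSeminorm (c : FiniteToOne) (k : ℕ) : Seminorm ℝ (ℕ →₀ ℝ) :=
  (c.fiber k).sup fun i => (normSeminorm ℝ ℝ).comp (lapply i)

variable {c : FiniteToOne} {k : ℕ} {v w : ℕ →₀ ℝ}

theorem norm_apply_le_blockSeminorm {i : ℕ} (hi : c i = k) : ‖v i‖ ≤ c.blockSeminorm k v :=
  Seminorm.le_finset_sup_apply (p := fun i => (normSeminorm ℝ ℝ).comp (lapply i))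
    (mem_fiber.2 hi)

theorem blockSeminorm_le {a : ℝ} (ha : 0 ≤ a) (h : ∀ i, c i = k → ‖v i‖ ≤ a) :
    c.blockSeminorm k v ≤ a :=
  Seminorm.finset_sup_apply_le ha fun i hi => h i (mem_fiber.1 hi)

theorem blockSeminorm_congr (h : ∀ i, c i = k → v i = w i) :
    c.blockSeminorm k v = c.blockSeminorm k w := by
  simp only [blockSeminorm, Seminorm.finset_sup_apply]
  congr 1
  exact Finset.sup_congr rfl fun i hi => by simp [h i (mem_fiber.1 hi)]

theorem blockSeminorm_eq_zero (h : ∀ i, c i = k → v i = 0) : c.blockSeminorm k v = 0 := by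
  rw [blockSeminorm_congr (w := 0) h, map_zero]

def blockSum (c : FiniteToOne) (v : ℕ →₀ ℝ) : ℝ :=
  ∑ k ∈ v.support.image c, c.blockSeminorm k v

theorem blockSum_eq_sum {K : Finset ℕ} (hK : v.support.image c ⊆ K) :
    c.blockSum v = ∑ k ∈ K, c.blockSeminorm k v :=
  Finset.sum_subset hK fun k _ hk => blockSeminorm_eq_zero fun i hik => by
    by_contra hi
    exact hk (Finset.mem_image.2 ⟨i, mem_support_iff.2 hi, hik⟩)

def blockSumSeminorm (c : FiniteToOne) : Seminorm ℝ (ℕ →₀ ℝ) :=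
  Seminorm.of c.blockSum
    (fun v w => by
      classical
      have hK : ∀ u : ℕ →₀ ℝ, u.support ⊆ (v + w).support ∪ v.support ∪ w.support → _ :=
        fun u hu => blockSum_eq_sum (c := c) (Finset.image_subset_image hu)
      rw [hK _ (by intro i; simp +contextual), hK v (by intro i; simp +contextual),
        hK w (by intro i; simp +contextual), ← Finset.sum_add_distrib]
      exact Finset.sum_le_sum fun k _ => map_add_le_add _ _ _)
    (fun r v => by
      rw [blockSum_eq_sum (Finset.image_subset_image (support_smul (b := r) (g := v))),
        blockSum, Finset.mul_sum]
      simp only [map_smul_eq_mul])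

theorem blockSumSeminorm_apply (v : ℕ →₀ ℝ) : c.blockSumSeminorm v = c.blockSum v := rfl

theorem norm_apply_le_blockSumSeminorm (v : ℕ →₀ ℝ) (i : ℕ) :
    ‖v i‖ ≤ c.blockSumSeminorm v := by
  by_cases hi : v i = 0
  · simp [hi]
  · calc ‖v i‖ ≤ c.blockSeminorm (c i) v := norm_apply_le_blockSeminorm rfl
      _ ≤ c.blockSum v := Finset.single_le_sum (fun k _ => apply_nonneg _ v)
          (Finset.mem_image_of_mem c (mem_support_iff.2 hi))

theorem blockSumSeminorm_le_of_forall_eq {a : ℝ} (ha : 0 ≤ a) (hk : ∀ i ∈ v.support, c i = k)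
    (hv : ∀ i, ‖v i‖ ≤ a) : c.blockSumSeminorm v ≤ a := by
  have hK : v.support.image c ⊆ {k} := fun j hj => by
    obtain ⟨i, hi, rfl⟩ := Finset.mem_image.1 hj
    simp [hk i hi]
  rw [blockSumSeminorm_apply, blockSum_eq_sum hK, Finset.sum_singleton]
  exact blockSeminorm_le ha fun i _ => hv i

theorem blockSumSeminorm_le_card_mul {a : ℝ} (hv : ∀ i, ‖v i‖ ≤ a) :
    c.blockSumSeminorm v ≤ v.support.card * a :=
  calc c.blockSum v ≤ (v.support.image c).card • a :=
        Finset.sum_le_card_nsmul _ _ _ fun k _ => blockSeminorm_le ((norm_nonneg _).trans (hv 0))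
          fun i _ => hv i
    _ ≤ v.support.card * a := by
        rw [nsmul_eq_mul]
        exact mul_le_mul_of_nonneg_right (by exact_mod_cast Finset.card_image_le)
          ((norm_nonneg _).trans (hv 0))

theorem blockSumSeminorm_single_one (n : ℕ) : c.blockSumSeminorm (single n 1) = 1 :=
  le_antisymm
    (blockSumSeminorm_le_of_forall_eq zero_le_one (k := c n) (by simp)
      fun i => by by_cases h : n = i <;> simp [h])
    (by simpa using norm_apply_le_blockSumSeminorm (c := c) (single n (1 : ℝ)) n)

theorem blockSumSeminorm_add_single_one {n : ℕ} (hn : ∀ i ∈ v.support, c i ≠ c n) :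
    c.blockSumSeminorm (v + single n 1) = c.blockSumSeminorm v + 1 := by
  classical
  refine le_antisymm ((map_add_le_add _ _ _).trans_eq (by rw [blockSumSeminorm_single_one])) ?_
  have hcn : c n ∉ v.support.image c := by simpa using hn
  have hvn : v n = 0 := by_contra fun h => hn n (mem_support_iff.2 h) rfl
  have hK : (v + single n 1).support.image c ⊆ insert (c n) (v.support.image c) := by
    intro k
    simp only [Finset.mem_image, Finset.mem_insert]
    rintro ⟨i, hi, rfl⟩
    rcases Finset.mem_union.1 (support_add hi) with hi | hi
    · exact Or.inr ⟨i, hi, rfl⟩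
    · exact Or.inl (by rw [Finset.mem_singleton.1 (support_single_subset hi)])
  rw [blockSumSeminorm_apply, blockSumSeminorm_apply, blockSum_eq_sum hK,
    Finset.sum_insert hcn, add_comm, blockSum]
  have hold : ∀ k ∈ v.support.image c, c.blockSeminorm k (v + single n 1) = c.blockSeminorm k v :=
    fun k hk => blockSeminorm_congr fun i hi => by
      have : n ≠ i := by rintro rfl; exact hcn (hi ▸ hk)
      simp [this]
  have hnew : 1 ≤ c.blockSeminorm (c n) (v + single n 1) := by
    have := norm_apply_le_blockSeminorm (c := c) (v := v + single n 1) (i := n) rfl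
    rwa [Finsupp.add_apply, hvn, single_eq_same, zero_add, norm_one] at this
  rw [Finset.sum_congr rfl hold]
  gcongr

end FiniteToOne

open Finsupp FiniteToOne

/-- `(a, b)` stands for `∑ c, a c • z c + ∑ n, b n • e n`, normed by
`‖(a, b)‖ = ⨆ c, |a c| + ∑ₖ max_{c i = k} |b i|` (see `pieceSeminorm`). -/
def PartitionSpace : Type := (FiniteToOne →₀ ℝ) × (ℕ →₀ ℝ)

namespace PartitionSpace

instance : AddCommGroup PartitionSpace :=
  inferInstanceAs (AddCommGroup ((FiniteToOne →₀ ℝ) × (ℕ →₀ ℝ)))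

instance : Module ℝ PartitionSpace :=
  inferInstanceAs (Module ℝ ((FiniteToOne →₀ ℝ) × (ℕ →₀ ℝ)))

def pieceSeminorm (c : FiniteToOne) : Seminorm ℝ PartitionSpace :=
  (normSeminorm ℝ ℝ).comp ((lapply c).comp (LinearMap.fst ℝ _ _)) +
    c.blockSumSeminorm.comp (LinearMap.snd ℝ _ _)

theorem pieceSeminorm_apply (c : FiniteToOne) (x : PartitionSpace) :
    pieceSeminorm c x = ‖x.1 c‖ + c.blockSumSeminorm x.2 := rfl

theorem bddAbove_range_pieceSeminorm : BddAbove (Set.range pieceSeminorm) :=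
  Seminorm.bddAbove_range_iff.2 fun x =>
    ⟨∑ c ∈ x.1.support, ‖x.1 c‖ + x.2.support.card * ∑ i ∈ x.2.support, ‖x.2 i‖, by
      rintro _ ⟨c, rfl⟩
      exact add_le_add (Finsupp.norm_apply_le_sum_norm x.1 c)
        (blockSumSeminorm_le_card_mul (Finsupp.norm_apply_le_sum_norm x.2))⟩

def supSeminorm : Seminorm ℝ PartitionSpace := ⨆ c, pieceSeminorm c

instance : Norm PartitionSpace := ⟨supSeminorm⟩

theorem norm_eq_iSup (x : PartitionSpace) : ‖x‖ = ⨆ c, pieceSeminorm c x :=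
  Seminorm.iSup_apply bddAbove_range_pieceSeminorm

theorem pieceSeminorm_le_norm (c : FiniteToOne) (x : PartitionSpace) : pieceSeminorm c x ≤ ‖x‖ :=
  norm_eq_iSup x ▸ le_ciSup (Seminorm.bddAbove_range_iff.1 bddAbove_range_pieceSeminorm x) c

theorem norm_le {x : PartitionSpace} {r : ℝ} (h : ∀ c, pieceSeminorm c x ≤ r) : ‖x‖ ≤ r :=
  norm_eq_iSup x ▸ ciSup_le h

theorem normedSpaceCore : NormedSpace.Core ℝ PartitionSpace where
  norm_nonneg _ := apply_nonneg supSeminorm _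
  norm_smul := map_smul_eq_mul supSeminorm
  norm_triangle := map_add_le_add supSeminorm
  norm_eq_zero_iff x := by
    refine ⟨fun hx => ?_, fun hx => hx ▸ map_zero supSeminorm⟩
    have h : ∀ c, ‖x.1 c‖ + c.blockSumSeminorm x.2 = 0 := fun c =>
      le_antisymm (hx ▸ pieceSeminorm_le_norm c x) (apply_nonneg (pieceSeminorm c) x)
    have h₁ : ∀ c, x.1 c = 0 := fun c => by
      have := h c
      rw [add_eq_zero_iff_of_nonneg (norm_nonneg _) (apply_nonneg _ _), norm_eq_zero] at this
      exact this.1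
    have h₂ : ∀ i, x.2 i = 0 := fun i => by
      refine norm_le_zero_iff.1 ((norm_apply_le_blockSumSeminorm (c := default) x.2 i).trans ?_)
      linarith [h default, norm_nonneg (x.1 default)]
    exact Prod.ext (Finsupp.ext h₁) (Finsupp.ext h₂)

instance : NormedAddCommGroup PartitionSpace := .ofCore normedSpaceCore

instance : NormedSpace ℝ PartitionSpace := .ofCore normedSpaceCore

def e (n : ℕ) : PartitionSpace := (0, single n 1)

def z (c : FiniteToOne) : PartitionSpace := (single c 1, 0)

theorem norm_e_le_one (n : ℕ) : ‖e n‖ ≤ 1 :=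
  norm_le fun c => by
    rw [pieceSeminorm_apply]
    simp [e, blockSumSeminorm_single_one]

theorem isLOrthogonalSeq_e : IsLOrthogonalSeq e := by
  refine ⟨norm_e_le_one, fun x => tendsto_order.2 ⟨fun a ha => ?_, fun a ha => ?_⟩⟩
  · obtain ⟨c, hc⟩ : ∃ c, a - 1 < pieceSeminorm c x :=
      exists_lt_of_lt_ciSup (norm_eq_iSup x ▸ (by linarith : a - 1 < ‖x‖))
    have hfin : (⋃ i ∈ x.2.support, (c ⁻¹' {c i})).Finite :=
      x.2.support.finite_toSet.biUnion fun i _ => c.2 (c i)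
    filter_upwards [Nat.cofinite_eq_atTop ▸ hfin.eventually_cofinite_notMem] with n hn
    have hn' : ∀ i ∈ x.2.support, c i ≠ c n := fun i hi hin =>
      hn (Set.mem_biUnion (Finset.mem_coe.2 hi) hin.symm)
    calc a < pieceSeminorm c x + 1 := by linarith
      _ = pieceSeminorm c (x + e n) := by
        change _ = ‖x.1 c + 0‖ + c.blockSumSeminorm (x.2 + single n 1)
        rw [pieceSeminorm_apply, add_zero, blockSumSeminorm_add_single_one hn', add_assoc]
      _ ≤ ‖x + e n‖ := pieceSeminorm_le_norm c _
  · filter_upwards with n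
    linarith [norm_add_le x (e n), norm_e_le_one n]

theorem norm_z_add_e_add_e_le {c : FiniteToOne} {n m : ℕ} (hnm : n ≠ m) (h : c n = c m) :
    ‖z c + e n + e m‖ ≤ ‖z c‖ + 1 := by
  have hz : 1 ≤ ‖z c‖ := by
    have := pieceSeminorm_le_norm c (z c)
    rw [pieceSeminorm_apply] at this
    simpa [z] using this
  refine (norm_le (r := 2) fun c' => ?_).trans (by linarith)
  change ‖single c (1 : ℝ) c' + 0 + 0‖ + c'.blockSumSeminorm (0 + single n 1 + single m 1) ≤ 2
  rw [add_zero, add_zero, zero_add]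
  by_cases hc : c = c'
  · subst hc
    have hsupp : ∀ i ∈ (single n (1 : ℝ) + single m 1).support, c i = c n := fun i hi => by
      rcases Finset.mem_union.1 (support_add hi) with hi | hi <;>
        simp [Finset.mem_singleton.1 (support_single_subset hi), h]
    have hle : ∀ i, ‖(single n (1 : ℝ) + single m 1 : ℕ →₀ ℝ) i‖ ≤ 1 := fun i => by
      rcases eq_or_ne n i with rfl | hin
      · simp [hnm.symm]
      · by_cases him : m = i <;> simp [hin, him]
    rw [single_eq_same, norm_one, one_add_one_eq_two.symm]
    exact add_le_add_right (blockSumSeminorm_le_of_forall_eq zero_le_one hsupp hle) 1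
  · rw [single_eq_of_ne' hc, norm_zero, zero_add]
    refine (map_add_le_add _ _ _).trans ?_
    rw [blockSumSeminorm_single_one, blockSumSeminorm_single_one]
    norm_num

end PartitionSpace

end

open PartitionSpace in
theorem hasBadLOrthogonalSeq_completion_partitionSpace :
    HasBadLOrthogonalSeq (Completion PartitionSpace) := by
  refine ⟨fun n => e n, isLOrthogonalSeq_coe_completion isLOrthogonalSeq_e,
    fun U _ hQ u hlim hu => hQ <| isQPoint_of_forall_injOn fun g hg => ?_⟩
  obtain ⟨B, hB, hlt⟩ := hu.exists_mem_forall_lt_norm_add_add hlim (z ⟨g, hg⟩)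
  refine ⟨B, hB, fun n hn m hm hnm => by_contra fun hne => (hlt n hn m hm).not_ge ?_⟩
  simpa only [← Completion.coe_add, Completion.norm_coe] using
    norm_z_add_e_add_e_le (c := ⟨g, hg⟩) hne hnm

/-- There exist a real Banach space `X` and an `L`-orthogonal sequence
`(x n)` in `X` such that for every nonprincipal ultrafilter `U` on `ℕ` that is not a
`Q`-point, the weak*-limit of `(ι (x n))` along `U` in `X**` is not an `L`-orthogonal
element of `X**`. -/
theorem stmt15 :
    ∃ (X : Type) (nX : NormedAddCommGroup X)
      (nsX : @NormedSpace ℝ X _ nX.toSeminormedAddCommGroup)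
      (cX : @CompleteSpace X nX.toMetricSpace.toPseudoMetricSpace.toUniformSpace),
      @HasBadLOrthogonalSeq X nX nsX cX :=
  ⟨_, _, _, _, hasBadLOrthogonalSeq_completion_partitionSpace⟩
end

section
/- Let X be a reflexive real Banach space whose dual X* is uniformly convex, and let Y be a real Banach space. Let T : X* → Y** be a bounded linear operator with ‖T‖ = 1 such that ‖T + ι_Y ∘ S‖ = 2 for every compact linear operator S : X* → Y with ‖S‖ = 1, where ι_Y : Y → Y** is the canonical embedding. Then T is an isometry and, for every x* ∈ X* and every y ∈ Y, ‖ι_Y(y) + T(x*)‖ = ‖y‖ + ‖x*‖. -/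
open NormedSpace

set_option maxSynthPendingDepth 3

set_option maxHeartbeats 1000000 in
/-- Let `X` be a reflexive real Banach space whose dual `X*` is uniformly
convex, and let `Y` be a real Banach space. Let `T : X* → Y**` be a bounded linear operator
with `‖T‖ = 1` such that `‖T + ι_Y ∘ S‖ = 2` for every compact linear operator `S : X* → Y`
with `‖S‖ = 1`. Then `T` is an isometry and `‖ι_Y y + T x*‖ = ‖y‖ + ‖x*‖` for every
`x* ∈ X*` and every `y ∈ Y`. -/
theorem stmt16 (X : Type) [NormedAddCommGroup X] [NormedSpace ℝ X] [CompleteSpace X]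
    (Y : Type) [NormedAddCommGroup Y] [NormedSpace ℝ Y] [CompleteSpace Y]
    (hrefl : Function.Surjective (inclusionInDoubleDual ℝ X))
    (huc : UniformConvexSpace (StrongDual ℝ X))
    (T : StrongDual ℝ X →L[ℝ] StrongDual ℝ (StrongDual ℝ Y)) (hT : ‖T‖ = 1)
    (hTS : ∀ S : StrongDual ℝ X →L[ℝ] Y, IsCompactOperator S → ‖S‖ = 1 →
      ‖T + (inclusionInDoubleDual ℝ Y).comp S‖ = 2) :
    Isometry T ∧
      ∀ (x' : StrongDual ℝ X) (y : Y), ‖inclusionInDoubleDual ℝ Y y + T x'‖ = ‖y‖ + ‖x'‖ := by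
  classical
  have hnjX : ∀ z : X, ‖inclusionInDoubleDual ℝ X z‖ = ‖z‖ := fun z =>
    (inclusionInDoubleDualLi ℝ (E := X)).norm_map z
  have hnjY : ∀ z : Y, ‖inclusionInDoubleDual ℝ Y z‖ = ‖z‖ := fun z =>
    (inclusionInDoubleDualLi ℝ (E := Y)).norm_map z
  -- Y is nontrivial
  have hY : ∃ y₀ : Y, ‖y₀‖ = 1 := by
    by_contra h
    push_neg at h
    have hy0 : ∀ y : Y, y = 0 := by
      intro y
      by_contra hy
      exact h (‖y‖⁻¹ • y) (by
        rw [norm_smul, norm_inv, norm_norm, inv_mul_cancel₀ (norm_ne_zero_iff.2 hy)])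
    have hT0 : T = 0 := by
      apply ContinuousLinearMap.ext; intro x'
      apply ContinuousLinearMap.ext; intro f
      have hf : f = (0 : StrongDual ℝ Y) := ContinuousLinearMap.ext fun y => by rw [hy0 y]; simp
      rw [hf]
      simp
    rw [hT0, norm_zero] at hT
    norm_num at hT
  -- key claim : for unit vectors the sum has norm 2
  have key : ∀ u : StrongDual ℝ X, ‖u‖ = 1 → ∀ v : Y, ‖v‖ = 1 →
      ‖T u + inclusionInDoubleDual ℝ Y v‖ = 2 := by
    intro u hu v hv
    have hu0 : u ≠ 0 := by rw [← norm_ne_zero_iff, hu]; norm_num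
    obtain ⟨F, hF1, hFu⟩ := exists_dual_vector ℝ u (norm_ne_zero_iff.2 hu0)
    obtain ⟨x, hx⟩ := hrefl F
    have hxnorm : ‖x‖ = 1 := by rw [← hnjX x, hx, hF1]
    have hux : u x = 1 := by
      have : F u = ‖u‖ := hFu
      rw [← hx] at this
      simpa [hu] using this
    set c : StrongDual ℝ X →L[ℝ] ℝ := inclusionInDoubleDual ℝ X x with hc
    have hcw : ∀ w : StrongDual ℝ X, c w = w x := fun w => rfl
    have hcnorm : ‖c‖ = 1 := (hnjX x).trans hxnorm
    set S : StrongDual ℝ X →L[ℝ] Y := c.smulRight v with hSdef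
    have hSnorm : ‖S‖ = 1 := by
      rw [hSdef, ContinuousLinearMap.norm_smulRight_apply, hcnorm, hv, one_mul]
    have hScomp : IsCompactOperator S := by
      have hcc : IsCompactOperator (c : StrongDual ℝ X → ℝ) := by
        refine ⟨Set.Icc (-‖c‖) ‖c‖, isCompact_Icc, ?_⟩
        filter_upwards [Metric.closedBall_mem_nhds (0 : StrongDual ℝ X) one_pos] with w hw
        have hw1 : ‖w‖ ≤ 1 := by simpa using hw
        have h1 : ‖c w‖ ≤ ‖c‖ := by
          calc ‖c w‖ ≤ ‖c‖ * ‖w‖ := c.le_opNorm w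
          _ ≤ ‖c‖ * 1 := mul_le_mul_of_nonneg_left hw1 (norm_nonneg _)
          _ = ‖c‖ := mul_one _
        rw [Real.norm_eq_abs] at h1
        exact Set.mem_Icc.2 (abs_le.mp h1)
      have hsm : Continuous (fun t : ℝ => t • v) := continuous_id.smul continuous_const
      exact hcc.continuous_comp hsm
    have h2 := hTS S hScomp hSnorm
    have hTu : ‖T u‖ ≤ 1 := by
      calc ‖T u‖ ≤ ‖T‖ * ‖u‖ := T.le_opNorm u
      _ = 1 := by rw [hT, hu, mul_one]
    have hiv : ‖inclusionInDoubleDual ℝ Y v‖ = 1 := by rw [hnjY v, hv]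
    have hle2 : ‖T u + inclusionInDoubleDual ℝ Y v‖ ≤ 2 := by
      calc ‖T u + inclusionInDoubleDual ℝ Y v‖ ≤ ‖T u‖ + ‖inclusionInDoubleDual ℝ Y v‖ :=
        norm_add_le _ _
      _ ≤ 2 := by rw [hiv]; linarith
    by_contra hne
    have hlt : ‖T u + inclusionInDoubleDual ℝ Y v‖ < 2 := lt_of_le_of_ne hle2 hne
    set ε : ℝ := 2 - ‖T u + inclusionInDoubleDual ℝ Y v‖ with hεdef
    have hε : 0 < ε := by rw [hεdef]; linarith
    obtain ⟨δ₀, hδ₀, hUC⟩ :=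
      exists_forall_closed_ball_dist_add_le_two_sub (StrongDual ℝ X) (show (0:ℝ) < ε/4 by linarith)
    set δ : ℝ := min δ₀ (ε/4) with hδdef
    have hδpos : 0 < δ := lt_min hδ₀ (by linarith)
    set m : ℝ := min δ (ε/2) with hmdef
    have hmpos : 0 < m := lt_min hδpos (by linarith)
    -- the pointwise bound
    have hbound : ∀ w : StrongDual ℝ X, ‖w‖ = 1 →
        ‖(T + (inclusionInDoubleDual ℝ Y).comp S) w‖ ≤ 2 - m := by
      intro w hw
      have hval : (T + (inclusionInDoubleDual ℝ Y).comp S) w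
          = T w + (w x) • inclusionInDoubleDual ℝ Y v := by
        simp [hSdef, ContinuousLinearMap.smulRight_apply, hcw, map_smul]
      rw [hval]
      have hTw : ‖T w‖ ≤ 1 := by
        calc ‖T w‖ ≤ ‖T‖ * ‖w‖ := T.le_opNorm w
        _ = 1 := by rw [hT, hw, mul_one]
      have hwx1 : |w x| ≤ 1 := by
        have h1 : ‖w x‖ ≤ ‖w‖ * ‖x‖ := w.le_opNorm x
        rw [hw, hxnorm, one_mul, Real.norm_eq_abs] at h1
        exact h1
      by_cases hcase : |w x| ≤ 1 - δ
      · have : ‖T w + (w x) • inclusionInDoubleDual ℝ Y v‖ ≤ ‖T w‖ + |w x| * 1 := by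
          calc ‖T w + (w x) • inclusionInDoubleDual ℝ Y v‖
              ≤ ‖T w‖ + ‖(w x) • inclusionInDoubleDual ℝ Y v‖ := norm_add_le _ _
          _ = ‖T w‖ + |w x| * 1 := by
              rw [norm_smul, Real.norm_eq_abs, hiv]
        have hm1 : m ≤ δ := min_le_left _ _
        linarith
      · push_neg at hcase
        set s : ℝ := if 0 ≤ w x then 1 else -1 with hsdef
        have hs1 : |s| = 1 := by
          rw [hsdef]; split <;> simp
        have hsw : s * w x = |w x| := by
          rw [hsdef]; split
          · rw [one_mul, abs_of_nonneg ‹_›]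
          · rw [neg_one_mul, abs_of_neg (lt_of_not_ge ‹_›)]
        set w' : StrongDual ℝ X := s • w with hw'def
        have hw'norm : ‖w'‖ = 1 := by
          rw [hw'def, norm_smul, Real.norm_eq_abs, hs1, hw, mul_one]
        have hw'x : w' x = |w x| := by
          rw [hw'def]; simpa using hsw
        have hclose : ‖w' - u‖ < ε/4 := by
          by_contra hfar
          push_neg at hfar
          have hsum := hUC (le_of_eq hw'norm) (le_of_eq hu) hfar
          have hlow : 2 - δ < ‖w' + u‖ := by
            have hval2 : (w' + u) x = |w x| + 1 := by
              simp [hw'x, hux]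
            have h1 : (w' + u) x ≤ ‖w' + u‖ := by
              have h2 : ‖(w' + u) x‖ ≤ ‖w' + u‖ * ‖x‖ := (w' + u).le_opNorm x
              rw [hxnorm, mul_one, Real.norm_eq_abs] at h2
              exact le_trans (le_abs_self _) h2
            rw [hval2] at h1
            linarith
          have hδδ₀ : δ ≤ δ₀ := min_le_left _ _
          linarith
        have hflip : ‖T w + (w x) • inclusionInDoubleDual ℝ Y v‖
            = ‖T w' + (w' x) • inclusionInDoubleDual ℝ Y v‖ := by
          have : T w' + (w' x) • inclusionInDoubleDual ℝ Y v
              = s • (T w + (w x) • inclusionInDoubleDual ℝ Y v) := by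
            rw [hw'def]
            simp [map_smul, smul_add, smul_smul]
          rw [this, norm_smul, Real.norm_eq_abs, hs1, one_mul]
        rw [hflip]
        have hdecomp : T w' + (w' x) • inclusionInDoubleDual ℝ Y v
            = (T u + inclusionInDoubleDual ℝ Y v) + T (w' - u)
              + (w' x - 1) • inclusionInDoubleDual ℝ Y v := by
          rw [map_sub, sub_smul, one_smul]
          abel
        have h3 : ‖T (w' - u)‖ ≤ ‖w' - u‖ := by
          calc ‖T (w' - u)‖ ≤ ‖T‖ * ‖w' - u‖ := T.le_opNorm _
          _ = ‖w' - u‖ := by rw [hT, one_mul]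
        have hw'x1 : |w x| ≤ 1 := hwx1
        have h4 : ‖(w' x - 1) • inclusionInDoubleDual ℝ Y v‖ ≤ δ := by
          rw [norm_smul, Real.norm_eq_abs, hiv, mul_one, hw'x]
          rw [abs_of_nonpos (by linarith)]
          linarith
        have h5 : ‖T w' + (w' x) • inclusionInDoubleDual ℝ Y v‖
            ≤ ‖T u + inclusionInDoubleDual ℝ Y v‖ + ‖T (w' - u)‖
              + ‖(w' x - 1) • inclusionInDoubleDual ℝ Y v‖ := by
          rw [hdecomp]
          exact le_trans (norm_add_le _ _) (by gcongr; exact norm_add_le _ _)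
        have hδε : δ ≤ ε/4 := min_le_right _ _
        have hm2 : m ≤ ε/2 := min_le_right _ _
        have : ‖T u + inclusionInDoubleDual ℝ Y v‖ = 2 - ε := by rw [hεdef]; ring
        linarith
    have hop : ‖T + (inclusionInDoubleDual ℝ Y).comp S‖ ≤ 2 - m := by
      apply ContinuousLinearMap.opNorm_le_of_unit_norm
      · linarith [min_le_right δ (ε/2), norm_nonneg (T u + inclusionInDoubleDual ℝ Y v)]
      · exact hbound
    rw [h2] at hop
    linarith
  obtain ⟨y₀, hy₀⟩ := hY
  -- T preserves norms
  have normT : ∀ x' : StrongDual ℝ X, ‖T x'‖ = ‖x'‖ := by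
    intro x'
    rcases eq_or_ne x' 0 with rfl | hx'
    · simp
    · have hnx : (0:ℝ) < ‖x'‖ := norm_pos_iff.2 hx'
      have hu : ‖(‖x'‖⁻¹ • x')‖ = 1 := by
        rw [norm_smul, norm_inv, norm_norm, inv_mul_cancel₀ hnx.ne']
      have h2 := key _ hu y₀ hy₀
      have hTu_le : ‖T (‖x'‖⁻¹ • x')‖ ≤ 1 := by
        calc ‖T (‖x'‖⁻¹ • x')‖ ≤ ‖T‖ * ‖(‖x'‖⁻¹ • x')‖ := T.le_opNorm _
        _ = 1 := by rw [hT, hu, mul_one]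
      have hiv : ‖inclusionInDoubleDual ℝ Y y₀‖ = 1 := by rw [hnjY, hy₀]
      have hTu_ge : 1 ≤ ‖T (‖x'‖⁻¹ • x')‖ := by
        have h3 := norm_add_le (T (‖x'‖⁻¹ • x')) (inclusionInDoubleDual ℝ Y y₀)
        rw [h2, hiv] at h3
        linarith
      have hTu : ‖T (‖x'‖⁻¹ • x')‖ = 1 := le_antisymm hTu_le hTu_ge
      rw [map_smul, norm_smul, norm_inv, norm_norm] at hTu
      field_simp at hTu
      linarith [hTu]
  refine ⟨AddMonoidHomClass.isometry_of_norm T normT, ?_⟩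
  intro x' y
  rcases eq_or_ne x' 0 with rfl | hx'
  · simp [hnjY y]
  rcases eq_or_ne y 0 with rfl | hy
  · simp [normT x']
  have hnx : (0:ℝ) < ‖x'‖ := norm_pos_iff.2 hx'
  have hny : (0:ℝ) < ‖y‖ := norm_pos_iff.2 hy
  set u : StrongDual ℝ X := ‖x'‖⁻¹ • x' with hudef
  set v : Y := ‖y‖⁻¹ • y with hvdef
  have hu : ‖u‖ = 1 := by
    rw [hudef, norm_smul, norm_inv, norm_norm, inv_mul_cancel₀ hnx.ne']
  have hv : ‖v‖ = 1 := by
    rw [hvdef, norm_smul, norm_inv, norm_norm, inv_mul_cancel₀ hny.ne']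
  have hk := key u hu v hv
  obtain ⟨φ, hφ1, hφA⟩ := exists_dual_vector ℝ (T u + inclusionInDoubleDual ℝ Y v) (by
    intro h0
    rw [h0] at hk
    norm_num at hk)
  rw [hk] at hφA
  have hφTu : φ (T u) ≤ 1 := by
    have h1 : ‖φ (T u)‖ ≤ ‖φ‖ * ‖T u‖ := φ.le_opNorm _
    rw [hφ1, one_mul, normT u, hu, Real.norm_eq_abs] at h1
    exact le_trans (le_abs_self _) h1
  have hφiv : φ (inclusionInDoubleDual ℝ Y v) ≤ 1 := by
    have h1 : ‖φ (inclusionInDoubleDual ℝ Y v)‖ ≤ ‖φ‖ * ‖inclusionInDoubleDual ℝ Y v‖ :=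
      φ.le_opNorm _
    rw [hφ1, one_mul, hnjY, hv, Real.norm_eq_abs] at h1
    exact le_trans (le_abs_self _) h1
  have hsum : φ (T u) + φ (inclusionInDoubleDual ℝ Y v) = 2 := by
    rw [← map_add]
    exact_mod_cast hφA
  have hφTu1 : φ (T u) = 1 := by linarith
  have hφiv1 : φ (inclusionInDoubleDual ℝ Y v) = 1 := by linarith
  have hxu : x' = ‖x'‖ • u := by rw [hudef, smul_inv_smul₀ hnx.ne']
  have hyv : y = ‖y‖ • v := by rw [hvdef, smul_inv_smul₀ hny.ne']
  have hge : ‖y‖ + ‖x'‖ ≤ ‖inclusionInDoubleDual ℝ Y y + T x'‖ := by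
    have e1 : φ (inclusionInDoubleDual ℝ Y y) = ‖y‖ := by
      have hrw : inclusionInDoubleDual ℝ Y y = ‖y‖ • inclusionInDoubleDual ℝ Y v := by
        rw [← map_smul, ← hyv]
      rw [hrw, map_smul, hφiv1, smul_eq_mul, mul_one]
    have e2 : φ (T x') = ‖x'‖ := by
      have hrw : T x' = ‖x'‖ • T u := by rw [← map_smul, ← hxu]
      rw [hrw, map_smul, hφTu1, smul_eq_mul, mul_one]
    have h1 : φ (inclusionInDoubleDual ℝ Y y + T x') = ‖y‖ + ‖x'‖ := by
      rw [map_add, e1, e2]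
    have h2 : ‖φ (inclusionInDoubleDual ℝ Y y + T x')‖
        ≤ ‖φ‖ * ‖inclusionInDoubleDual ℝ Y y + T x'‖ := φ.le_opNorm _
    rw [hφ1, one_mul, Real.norm_eq_abs] at h2
    calc ‖y‖ + ‖x'‖ = φ (inclusionInDoubleDual ℝ Y y + T x') := h1.symm
    _ ≤ |φ (inclusionInDoubleDual ℝ Y y + T x')| := le_abs_self _
    _ ≤ ‖inclusionInDoubleDual ℝ Y y + T x'‖ := h2
  have hle : ‖inclusionInDoubleDual ℝ Y y + T x'‖ ≤ ‖y‖ + ‖x'‖ := by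
    calc ‖inclusionInDoubleDual ℝ Y y + T x'‖
        ≤ ‖inclusionInDoubleDual ℝ Y y‖ + ‖T x'‖ := norm_add_le _ _
    _ = ‖y‖ + ‖x'‖ := by rw [hnjY, normT]
  linarith
end

section
/- Let X and Y be real Banach spaces with Y ≠ {0}, and let T : Y* → X** be a linear isometry such that ‖ι_X(x) + T(y*)‖ = ‖x‖ + ‖y*‖ for every x ∈ X and every y* ∈ Y*, where ι_X : X → X** is the canonical embedding. Then for every compact linear operator S : Y* → X one has ‖T + ι_X ∘ S‖ = 1 + ‖S‖ (norms of bounded linear operators from Y* to X**). -/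
/-!
The hypothesis says that `ι_X (S y) + T y` has norm `‖S y‖ + ‖y‖` for every `y`, so the operator
`T + ι_X ∘ S` sends a unit vector `y` to a vector of norm `‖S y‖ + 1`. Taking the supremum over the
unit sphere, where `‖S y‖` gets arbitrarily close to `‖S‖`, gives `‖T + ι_X ∘ S‖ = 1 + ‖S‖`.
-/

open NormedSpace

set_option maxSynthPendingDepth 3

instance StrongDual.nontrivial {𝕜 E : Type*} [RCLike 𝕜] [NormedAddCommGroup E] [NormedSpace 𝕜 E]
    [Nontrivial E] : Nontrivial (StrongDual 𝕜 E) := by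
  obtain ⟨g, hg, -⟩ := exists_dual_vector' 𝕜 (0 : E)
  exact nontrivial_of_ne g 0 fun h ↦ by simp [h] at hg

namespace ContinuousLinearMap

variable {𝕜 𝕜₂ 𝕜₃ E F G : Type*} [NormedAddCommGroup E] [NormedAddCommGroup F]
  [NormedAddCommGroup G] [DenselyNormedField 𝕜] [NormedAlgebra ℝ 𝕜] [NontriviallyNormedField 𝕜₂]
  [NontriviallyNormedField 𝕜₃] [NormedSpace 𝕜 E] [NormedSpace 𝕜₂ F] [NormedSpace 𝕜₃ G]
  {σ₁₂ : 𝕜 →+* 𝕜₂} {σ₁₃ : 𝕜 →+* 𝕜₃} [RingHomIsometric σ₁₂] [RingHomIsometric σ₁₃] [Nontrivial E]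

theorem exists_norm_eq_one_lt_apply_of_lt_opNorm (f : E →SL[σ₁₂] F) {r : ℝ} (hr : r < ‖f‖) :
    ∃ x : E, ‖x‖ = 1 ∧ r < ‖f x‖ := by
  rcases lt_or_ge r 0 with hr₀ | hr₀
  · let : NormedSpace ℝ E := NormedSpace.restrictScalars ℝ 𝕜 E
    obtain ⟨x, hx⟩ := exists_norm_eq E zero_le_one
    exact ⟨x, hx, hr₀.trans_le (norm_nonneg _)⟩
  · lift r to NNReal using hr₀
    obtain ⟨x, hx, hfx⟩ := f.exists_nnnorm_eq_one_lt_apply_of_lt_opNNNorm hr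
    exact ⟨x, congrArg NNReal.toReal hx, hfx⟩

theorem opNorm_eq_opNorm_add_one_of_norm_apply (A : E →SL[σ₁₂] F) (S : E →SL[σ₁₃] G)
    (h : ∀ x, ‖A x‖ = ‖S x‖ + ‖x‖) : ‖A‖ = ‖S‖ + 1 := by
  refine le_antisymm (A.opNorm_le_bound (by positivity) fun x ↦ ?_) (le_of_forall_lt fun c hc ↦ ?_)
  · rw [h, add_mul, one_mul]
    gcongr
    exact S.le_opNorm x
  · obtain ⟨x, hx, hSx⟩ := S.exists_norm_eq_one_lt_apply_of_lt_opNorm (r := c - 1) (by linarith)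
    calc c < ‖S x‖ + ‖x‖ := by linarith
      _ = ‖A x‖ := (h x).symm
      _ ≤ ‖A‖ := by simpa [hx] using A.le_opNorm x

end ContinuousLinearMap

theorem stmt17_general (X : Type) [NormedAddCommGroup X] [NormedSpace ℝ X]
    (Y : Type) [NormedAddCommGroup Y] [NormedSpace ℝ Y] [Nontrivial Y]
    (T : StrongDual ℝ Y →ₗᵢ[ℝ] StrongDual ℝ (StrongDual ℝ X))
    (hT : ∀ (x : X) (y' : StrongDual ℝ Y), ‖inclusionInDoubleDual ℝ X x + T y'‖ = ‖x‖ + ‖y'‖) :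
    ∀ S : StrongDual ℝ Y →L[ℝ] X, IsCompactOperator S →
      ‖T.toContinuousLinearMap + (inclusionInDoubleDual ℝ X).comp S‖ = 1 + ‖S‖ := by
  intro S _
  rw [add_comm 1]
  refine ContinuousLinearMap.opNorm_eq_opNorm_add_one_of_norm_apply _ S fun y ↦ ?_
  rw [← hT (S y) y, add_comm]
  rfl

/-- Let `X` and `Y` be real Banach spaces with `Y ≠ {0}`, and let
`T : Y* → X**` be a linear isometry such that `‖ι_X x + T y*‖ = ‖x‖ + ‖y*‖` for every
`x ∈ X` and every `y* ∈ Y*`. Then for every compact linear operator `S : Y* → X` one has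
`‖T + ι_X ∘ S‖ = 1 + ‖S‖` (operator norms of bounded linear operators from `Y*` to `X**`). -/
theorem stmt17 (X : Type) [NormedAddCommGroup X] [NormedSpace ℝ X] [CompleteSpace X]
    (Y : Type) [NormedAddCommGroup Y] [NormedSpace ℝ Y] [CompleteSpace Y] [Nontrivial Y]
    (T : StrongDual ℝ Y →ₗᵢ[ℝ] StrongDual ℝ (StrongDual ℝ X))
    (hT : ∀ (x : X) (y' : StrongDual ℝ Y), ‖inclusionInDoubleDual ℝ X x + T y'‖ = ‖x‖ + ‖y'‖) :
    ∀ S : StrongDual ℝ Y →L[ℝ] X, IsCompactOperator S →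
      ‖T.toContinuousLinearMap + (inclusionInDoubleDual ℝ X).comp S‖ = 1 + ‖S‖ :=
  stmt17_general X Y T hT
end

section
/- Let K be a nonempty compact metric space without isolated points. Then C(K) has an L-orthogonal sequence. -/
open Metric Set

/-- In a metric space with no isolated points, every nonempty open set is infinite. -/
lemma stmt18_aux_infinite {K : Type} [MetricSpace K] (h : ∀ x : K, ¬ IsOpen ({x} : Set K))
    {U : Set K} (hU : IsOpen U) (hne : U.Nonempty) : U.Infinite := by
  intro hfin
  obtain ⟨p, hp⟩ := hne
  apply h p
  have h1 : ({p} : Set K) = U ∩ (U \ {p})ᶜ := by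
    ext x
    simp only [mem_singleton_iff, mem_inter_iff, mem_compl_iff, mem_diff, not_and, not_not]
    constructor
    · rintro rfl; exact ⟨hp, fun _ => rfl⟩
    · rintro ⟨hxU, hx⟩; exact hx hxU
  rw [h1]
  exact hU.inter ((hfin.diff (t := {p})).isClosed.isOpen_compl)

/-- Key construction: an oscillating function of norm at most 1 attaining values 1 and -1
within distance `r` of any point. -/
lemma stmt18_aux_exists (K : Type) [MetricSpace K] [CompactSpace K] [Nonempty K]
    (h : ∀ x : K, ¬ IsOpen ({x} : Set K)) {r : ℝ} (hr : 0 < r) :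
    ∃ f : C(K, ℝ), ‖f‖ ≤ 1 ∧ ∀ x : K,
      (∃ p, dist x p < r ∧ f p = 1) ∧ (∃ q, dist x q < r ∧ f q = -1) := by
  obtain ⟨T, -, hTfin, hTcov⟩ :=
    finite_cover_balls_of_compact (isCompact_univ (X := K)) (half_pos hr)
  -- every point is within r/2 of some point of T
  have hcov : ∀ x : K, ∃ c ∈ T, dist x c < r / 2 := by
    intro x
    have := hTcov (mem_univ x)
    simpa [mem_ball] using this
  have hTne : T.Nonempty := by
    obtain ⟨c, hc, -⟩ := hcov (Classical.arbitrary K)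
    exact ⟨c, hc⟩
  -- choose a point in each ball avoiding T
  have hball : ∀ c : K, ∃ y, y ∈ ball c (r / 2) \ T := fun c =>
    ((stmt18_aux_infinite h isOpen_ball (nonempty_ball.2 (half_pos hr))).diff hTfin).nonempty
  choose q hq using hball
  set Q : Set K := q '' T with hQdef
  have hQfin : Q.Finite := hTfin.image q
  have hQne : Q.Nonempty := hTne.image q
  have hQT : ∀ y ∈ Q, y ∉ T := by
    rintro y ⟨c, hc, rfl⟩
    exact (hq c).2
  -- the minimal distance between T and Q
  have hpos : ∀ p ∈ hTfin.toFinset, 0 < infDist p Q := by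
    intro p hp
    rw [Set.Finite.mem_toFinset] at hp
    exact (hQfin.isClosed.notMem_iff_infDist_pos hQne).1 (fun hpQ => hQT p hpQ hp)
  set δ : ℝ := (hTfin.toFinset).inf' (by simpa using hTne) (fun p => infDist p Q) with hδdef
  have hδpos : 0 < δ := by
    rw [hδdef, Finset.lt_inf'_iff]
    exact hpos
  have hδT : ∀ p ∈ T, δ ≤ infDist p Q := by
    intro p hp
    exact Finset.inf'_le _ (hTfin.mem_toFinset.2 hp)
  have hδQ : ∀ y ∈ Q, δ ≤ infDist y T := by
    intro y hy
    by_contra hlt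
    rw [not_le, infDist_lt_iff hTne] at hlt
    obtain ⟨p, hpT, hd⟩ := hlt
    have h1 : δ ≤ infDist p Q := hδT p hpT
    have h2 : infDist p Q ≤ dist p y := infDist_le_dist_of_mem hy
    rw [dist_comm] at hd
    linarith
  -- define the function
  set f : C(K, ℝ) := ⟨fun x => min 1 (infDist x Q / δ) - min 1 (infDist x T / δ), by
    exact (continuous_const.min ((continuous_infDist_pt Q).div_const δ)).sub
      (continuous_const.min ((continuous_infDist_pt T).div_const δ))⟩ with hfdef
  have hbounds : ∀ (S : Set K) (x : K), 0 ≤ min 1 (infDist x S / δ) ∧ min 1 (infDist x S / δ) ≤ 1 :=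
    fun S x => ⟨le_min zero_le_one (div_nonneg infDist_nonneg hδpos.le), min_le_left _ _⟩
  have hfT : ∀ p ∈ T, f p = 1 := by
    intro p hp
    have h1 : min 1 (infDist p Q / δ) = 1 :=
      min_eq_left ((one_le_div hδpos).2 (hδT p hp))
    have h2 : min 1 (infDist p T / δ) = 0 := by
      rw [infDist_zero_of_mem hp, zero_div, min_eq_right zero_le_one]
    simp [hfdef, h1, h2]
  have hfQ : ∀ y ∈ Q, f y = -1 := by
    intro y hy
    have h1 : min 1 (infDist y T / δ) = 1 :=
      min_eq_left ((one_le_div hδpos).2 (hδQ y hy))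
    have h2 : min 1 (infDist y Q / δ) = 0 := by
      rw [infDist_zero_of_mem hy, zero_div, min_eq_right zero_le_one]
    simp [hfdef, h1, h2]
  refine ⟨f, ?_, ?_⟩
  · rw [ContinuousMap.norm_le _ zero_le_one]
    intro x
    rw [Real.norm_eq_abs]
    have hb1 := hbounds Q x
    have hb2 := hbounds T x
    rw [abs_le]
    constructor
    · simp only [hfdef, ContinuousMap.coe_mk]; linarith [hb1.1, hb2.2]
    · simp only [hfdef, ContinuousMap.coe_mk]; linarith [hb1.2, hb2.1]
  · intro x
    obtain ⟨c, hcT, hxc⟩ := hcov x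
    constructor
    · exact ⟨c, by linarith, hfT c hcT⟩
    · refine ⟨q c, ?_, hfQ (q c) (mem_image_of_mem q hcT)⟩
      have h1 : dist c (q c) < r / 2 := by
        have := (hq c).1
        rw [mem_ball] at this
        rw [dist_comm]
        exact this
      calc dist x (q c) ≤ dist x c + dist c (q c) := dist_triangle _ _ _
        _ < r / 2 + r / 2 := by linarith
        _ = r := by ring

/-- Let `K` be a nonempty compact metric space without isolated points.
Then `C(K)` has an `L`-orthogonal sequence. -/
theorem stmt18 (K : Type) [MetricSpace K] [CompactSpace K] [Nonempty K]
    (h : ∀ x : K, ¬ IsOpen ({x} : Set K)) :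
    ∃ f : ℕ → C(K, ℝ), (∀ n, ‖f n‖ ≤ 1) ∧
      ∀ g : C(K, ℝ), Filter.Tendsto (fun n => ‖g + f n‖) Filter.atTop (nhds (1 + ‖g‖)) := by
  have hex : ∀ n : ℕ, ∃ f : C(K, ℝ), ‖f‖ ≤ 1 ∧ ∀ x : K,
      (∃ p, dist x p < 1 / (n + 1) ∧ f p = 1) ∧ (∃ q, dist x q < 1 / (n + 1) ∧ f q = -1) :=
    fun n => stmt18_aux_exists K h (by positivity)
  choose f hf1 hf2 using hex
  refine ⟨f, hf1, ?_⟩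
  intro g
  -- a point where |g| attains its maximum
  obtain ⟨x0, -, hx0⟩ := isCompact_univ.exists_isMaxOn Set.univ_nonempty
    (g.continuous.abs.continuousOn (s := Set.univ))
  have hnorm : ‖g‖ = |g x0| := by
    refine le_antisymm ?_ ?_
    · rw [ContinuousMap.norm_le _ (abs_nonneg _)]
      intro y
      rw [Real.norm_eq_abs]
      exact hx0 (Set.mem_univ y)
    · rw [← Real.norm_eq_abs]
      exact g.norm_coe_le_norm x0
  rw [Metric.tendsto_atTop]
  intro ε hε
  obtain ⟨δ, hδpos, hδ⟩ := Metric.continuousAt_iff.1 g.continuous.continuousAt (ε / 2)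
    (half_pos hε)
  obtain ⟨N, hN⟩ := exists_nat_one_div_lt hδpos
  refine ⟨N, fun n hn => ?_⟩
  have hsmall : (1 : ℝ) / (n + 1) < δ := by
    calc (1 : ℝ) / (n + 1) ≤ 1 / (N + 1) := by
          apply one_div_le_one_div_of_le (by positivity)
          exact_mod_cast by omega
      _ < δ := hN
  obtain ⟨⟨p, hpd, hp1⟩, ⟨qq, hqd, hq1⟩⟩ := hf2 n x0
  -- upper bound
  have hub : ‖g + f n‖ ≤ ‖g‖ + 1 :=
    le_trans (norm_add_le g (f n)) (by linarith [hf1 n])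
  -- lower bound
  have hlb : 1 + ‖g‖ - ε / 2 ≤ ‖g + f n‖ := by
    rcases le_or_gt 0 (g x0) with h0 | h0
    · have hgn : ‖g‖ = g x0 := by rw [hnorm, abs_of_nonneg h0]
      have hgp : |g p - g x0| < ε / 2 := by
        have := hδ (x := p) (by rw [dist_comm x0 p] at hpd; linarith)
        rwa [Real.dist_eq] at this
      have h1 : g x0 - ε / 2 + 1 ≤ g p + f n p := by
        rw [hp1]
        have := (abs_lt.1 hgp).1
        linarith
      calc 1 + ‖g‖ - ε / 2 = g x0 - ε / 2 + 1 := by rw [hgn]; ring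
        _ ≤ g p + f n p := h1
        _ ≤ |g p + f n p| := le_abs_self _
        _ = ‖(g + f n) p‖ := by rw [Real.norm_eq_abs, ContinuousMap.add_apply]
        _ ≤ ‖g + f n‖ := (g + f n).norm_coe_le_norm p
    · have hgn : ‖g‖ = -g x0 := by rw [hnorm, abs_of_neg h0]
      have hgq : |g qq - g x0| < ε / 2 := by
        have := hδ (x := qq) (by rw [dist_comm x0 qq] at hqd; linarith)
        rwa [Real.dist_eq] at this
      have h1 : -g x0 - ε / 2 + 1 ≤ -(g qq + f n qq) := by
        rw [hq1]
        have := (abs_lt.1 hgq).2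
        linarith
      calc 1 + ‖g‖ - ε / 2 = -g x0 - ε / 2 + 1 := by rw [hgn]; ring
        _ ≤ -(g qq + f n qq) := h1
        _ ≤ |g qq + f n qq| := neg_le_abs _
        _ = ‖(g + f n) qq‖ := by rw [Real.norm_eq_abs, ContinuousMap.add_apply]
        _ ≤ ‖g + f n‖ := (g + f n).norm_coe_le_norm qq
  rw [Real.dist_eq, abs_lt]
  constructor <;> linarith
end
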